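/- arXiv:2209.05570 — 6 statements merged into one kernel-verified Lean document; each statement's English description precedes it below -/
import Mathlib

section
/- Let c > 0, φ* > c. Suppose τ is an ℕ-valued random variable with Pr(τ ≥ 1) = 1 such that for every t with Pr(τ > t) > 0 we have c ≤ E[cτ | τ > t] − ct ≤ φ*. Then there exists a constant K such that for all t, Pr(τ = t) ≤ K·(1 − c/φ*)^{t}. -/
/-- Geometric tail bound for feasible (obedient) stopping times. -/
theorem stmt3 (c φs : ℝ) (hc : 0 < c) (hφ : c < φs)
    (p : ℕ → ℝ) (hp0 : ∀ n, 0 ≤ p n) (hp1 : (∑' n : ℕ, p n) = 1) (hstart : p 0 = 0)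
    (hmean : Summable fun n : ℕ => (n : ℝ) * p n)
    (P E C : ℕ → ℝ)
    (hP : ∀ t, P t = ∑' s : ℕ, if t < s then p s else 0)
    (hE : ∀ t, E t = ∑' s : ℕ, if t < s then (s : ℝ) * p s else 0)
    (hC : ∀ t, C t = c * E t / P t - c * t)
    (hobed : ∀ t, 0 < P t → c ≤ C t ∧ C t ≤ φs) :
    ∃ K : ℝ, ∀ t : ℕ, p t ≤ K * (1 - c / φs) ^ t := by
  have hφ0 : 0 < φs := hc.trans hφ
  have hr0 : 0 < 1 - c / φs := by
    have h1 : c / φs < 1 := (div_lt_one hφ0).2 hφ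
    linarith
  have hps : Summable p := by
    by_contra h
    rw [tsum_eq_zero_of_not_summable h] at hp1
    norm_num at hp1
  have hnn1 : ∀ t s : ℕ, 0 ≤ (if t < s then p s else 0) := by
    intro t s; split_ifs with h
    · exact hp0 s
    · exact le_rfl
  have hnn2 : ∀ t s : ℕ, 0 ≤ (if t < s then (s : ℝ) * p s else 0) := by
    intro t s; split_ifs with h
    · exact mul_nonneg (Nat.cast_nonneg s) (hp0 s)
    · exact le_rfl
  have hsum1 : ∀ t, Summable (fun s => if t < s then p s else 0) := by
    intro t
    apply Summable.of_nonneg_of_le (hnn1 t) _ hps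
    intro s; split_ifs with h
    · exact le_rfl
    · exact hp0 s
  have hsum2 : ∀ t, Summable (fun s : ℕ => if t < s then (s : ℝ) * p s else 0) := by
    intro t
    apply Summable.of_nonneg_of_le (hnn2 t) _ hmean
    intro s; split_ifs with h
    · exact le_rfl
    · exact mul_nonneg (Nat.cast_nonneg s) (hp0 s)
  have hPnn : ∀ t, 0 ≤ P t := fun t => by rw [hP]; exact tsum_nonneg (hnn1 t)
  have hEnn : ∀ t, 0 ≤ E t := fun t => by rw [hE]; exact tsum_nonneg (hnn2 t)
  have hsplit : ∀ (f : ℕ → ℝ) (t : ℕ), Summable (fun s => if t + 1 < s then f s else 0) →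
      (∑' s, if t < s then f s else 0) = (∑' s, if t + 1 < s then f s else 0) + f (t + 1) := by
    intro f t hs
    have he : ∀ s, (if t < s then f s else 0)
        = (if t + 1 < s then f s else 0) + (if s = t + 1 then f (t + 1) else 0) := by
      intro s
      rcases Nat.lt_trichotomy s (t + 1) with h | h | h
      · rw [if_neg (by omega), if_neg (by omega), if_neg (by omega)]; ring
      · subst h; rw [if_pos (by omega), if_neg (by omega), if_pos rfl]; ring
      · rw [if_pos (by omega), if_pos h, if_neg (by omega)]; ring
    calc (∑' s, if t < s then f s else 0)
        = ∑' s, ((if t + 1 < s then f s else 0) + (if s = t + 1 then f (t + 1) else 0)) :=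
          tsum_congr he
      _ = (∑' s, if t + 1 < s then f s else 0) + ∑' s, (if s = t + 1 then f (t + 1) else 0) :=
          Summable.tsum_add hs ⟨f (t + 1), hasSum_ite_eq (t + 1) (f (t + 1))⟩
      _ = (∑' s, if t + 1 < s then f s else 0) + f (t + 1) := by rw [tsum_ite_eq]
  have hPrec : ∀ t, P t = P (t + 1) + p (t + 1) := fun t => by
    rw [hP, hP]; exact hsplit p t (hsum1 (t + 1))
  have hErec : ∀ t, E t = E (t + 1) + ((t : ℝ) + 1) * p (t + 1) := fun t => by
    rw [hE, hE]
    have h := hsplit (fun s => (s : ℝ) * p s) t (hsum2 (t + 1))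
    push_cast at h
    exact h
  have hple : ∀ t, p (t + 1) ≤ P t := by
    intro t
    rw [hP]
    have h := Summable.le_tsum (hsum1 t) (t + 1) (fun s _ => hnn1 t s)
    simpa using h
  -- the obedience bounds on D t := c * E t - c * t * P t
  have hD : ∀ t : ℕ, c * P t ≤ c * E t - c * t * P t ∧ c * E t - c * t * P t ≤ φs * P t := by
    intro t
    by_cases hPt : 0 < P t
    · obtain ⟨h1, h2⟩ := hobed t hPt
      rw [hC] at h1 h2
      have h3 : (c + c * t) * P t ≤ c * E t := by
        rw [← le_div_iff₀ hPt]; linarith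
      have h4 : c * E t ≤ (φs + c * t) * P t := by
        rw [← div_le_iff₀ hPt]; linarith
      constructor <;> nlinarith
    · have hP0 : P t = 0 := le_antisymm (not_lt.1 hPt) (hPnn t)
      have hterm : ∀ s, t < s → p s = 0 := by
        intro s hs
        have h1 := Summable.le_tsum (hsum1 t) s (fun b _ => hnn1 t b)
        rw [← hP t] at h1
        rw [if_pos hs, hP0] at h1
        exact le_antisymm h1 (hp0 s)
      have hE0 : E t = 0 := by
        rw [hE]
        convert tsum_zero with s
        split_ifs with h
        · rw [hterm s h]; ring
        · rfl
      rw [hP0, hE0]; simp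
  have hDrec : ∀ t : ℕ, c * E (t + 1) - c * ((t : ℝ) + 1) * P (t + 1)
      = (c * E t - c * t * P t) - c * P t := by
    intro t
    rw [hErec t, hPrec t]
    ring
  have hgeo : ∀ t : ℕ, c * E t - c * t * P t ≤ (c * E 0) * (1 - c / φs) ^ t := by
    intro t
    induction t with
    | zero => norm_num
    | succ n ih =>
      have hrec := hDrec n
      have hlo := (hD n).1
      have hhi := (hD n).2
      have hcP : 0 ≤ c * P n := mul_nonneg hc.le (hPnn n)
      have h3 : (c / φs) * (c * E n - c * n * P n) ≤ (c / φs) * (φs * P n) :=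
        mul_le_mul_of_nonneg_left hhi (div_pos hc hφ0).le
      have h4 : (c / φs) * (φs * P n) = c * P n := by
        field_simp
      have key : c * E (n + 1) - c * ((n : ℝ) + 1) * P (n + 1)
          ≤ (1 - c / φs) * (c * E n - c * n * P n) := by
        rw [hrec]; nlinarith
      have hfin : c * E (n + 1) - c * ((n : ℝ) + 1) * P (n + 1)
          ≤ (c * E 0) * (1 - c / φs) ^ (n + 1) := by
        calc c * E (n + 1) - c * ((n : ℝ) + 1) * P (n + 1)
            ≤ (1 - c / φs) * (c * E n - c * n * P n) := key
          _ ≤ (1 - c / φs) * ((c * E 0) * (1 - c / φs) ^ n) :=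
              mul_le_mul_of_nonneg_left ih hr0.le
          _ = (c * E 0) * (1 - c / φs) ^ (n + 1) := by ring
      push_cast
      exact hfin
  refine ⟨E 0 / (1 - c / φs), ?_⟩
  intro t
  cases t with
  | zero =>
    rw [hstart]
    exact mul_nonneg (div_nonneg (hEnn 0) hr0.le) (pow_nonneg hr0.le 0)
  | succ n =>
    have h1 : p (n + 1) ≤ P n := hple n
    have h2 := (hD n).1
    have h3 := hgeo n
    have h5 : c * p (n + 1) ≤ c * (E 0 * (1 - c / φs) ^ n) := by nlinarith
    have h6 : p (n + 1) ≤ E 0 * (1 - c / φs) ^ n := le_of_mul_le_mul_left h5 hc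
    calc p (n + 1) ≤ E 0 * (1 - c / φs) ^ n := h6
      _ = E 0 / (1 - c / φs) * (1 - c / φs) ^ (n + 1) := by
          rw [pow_succ', ← mul_assoc, div_mul_cancel₀ _ hr0.ne']
end

section
/- Let c > 0, φ₀ ∈ (0, φ*]. Fix a sequence (C_t)_{t∈ℕ} with C_0 ≤ φ₀, C_t ∈ [c, φ*] for all t, and C_t − C_{t+1} ≤ c for all t. Then setting q_t := (C_t − c)/C_{t+1} we have q_t ∈ [0,1] for all t, so the (sub)probability kernel Pr(τ > t+1 | τ > t) = q_t induces a well-defined ℕ ∪ {∞}-valued random time τ satisfying E[cτ | τ > t] − ct = C_t for each t with Pr(τ > t) > 0. -/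
/-- An obedient sequence (C_t) induces a well-defined random time whose conditional
expected costs reproduce the sequence. -/
theorem stmt4 (c φ0 φs : ℝ) (hc : 0 < c) (hφ0 : 0 < φ0) (hφ0s : φ0 ≤ φs)
    (C : ℕ → ℝ) (hC0 : C 0 ≤ φ0) (hCl : ∀ t, c ≤ C t) (hCu : ∀ t, C t ≤ φs)
    (hCd : ∀ t, C t - C (t + 1) ≤ c)
    (q : ℕ → ℝ) (hq : ∀ t, q t = (C t - c) / C (t + 1))
    (a : ℕ → ℝ) (ha : ∀ t, a t = ∏ s ∈ Finset.range t, q s)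
    (p : ℕ → ℝ) (hp0 : p 0 = 0) (hp : ∀ t, p (t + 1) = a t - a (t + 1)) :
    (∀ t, 0 ≤ q t ∧ q t ≤ 1) ∧
    (∀ t : ℕ, 0 < a t →
      (∑' s : ℕ, if t < s then c * (s : ℝ) * p s else 0) / a t - c * t = C t) := by
  have hCpos : ∀ t, 0 < C t := fun t => lt_of_lt_of_le hc (hCl t)
  have hqb : ∀ t, 0 ≤ q t ∧ q t ≤ 1 := by
    intro t
    rw [hq t]
    constructor
    · exact div_nonneg (by linarith [hCl t]) (le_of_lt (hCpos (t + 1)))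
    · rw [div_le_one (hCpos (t + 1))]
      linarith [hCd t]
  have ha0 : ∀ t, 0 ≤ a t := by
    intro t
    rw [ha t]
    exact Finset.prod_nonneg fun s _ => (hqb s).1
  have hasucc : ∀ t, a (t + 1) = a t * q t := by
    intro t; rw [ha, ha, Finset.prod_range_succ]
  have hanti : ∀ t, a (t + 1) ≤ a t := by
    intro t
    rw [hasucc t]
    calc a t * q t ≤ a t * 1 := mul_le_mul_of_nonneg_left (hqb t).2 (ha0 t)
    _ = a t := mul_one _
  have hAnti : Antitone a := antitone_nat_of_succ_le hanti
  have ha1 : a 0 = 1 := by rw [ha]; simp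
  -- key telescoping identity
  have hkey : ∀ t, a t * C t - a (t + 1) * C (t + 1) = c * a t := by
    intro t
    rw [hasucc t, hq t]
    have hne := ne_of_gt (hCpos (t + 1))
    field_simp
    ring
  -- telescoped partial sums
  have htel : ∀ t N, t ≤ N →
      c * ∑ s ∈ Finset.Ico t N, a s = a t * C t - a N * C N := by
    intro t N htN
    induction N with
    | zero =>
      have : t = 0 := Nat.le_zero.mp htN
      subst this; simp
    | succ N ih =>
      rcases Nat.lt_or_ge t (N + 1) with h | h
      · have htN' : t ≤ N := Nat.lt_succ_iff.mp h
        rw [Finset.sum_Ico_succ_top htN', mul_add, ih htN']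
        linarith [hkey N]
      · have : t = N + 1 := le_antisymm htN h
        subst this; simp
  have haC0 : ∀ N, 0 ≤ a N * C N := fun N => mul_nonneg (ha0 N) (le_of_lt (hCpos N))
  -- summability of a
  have hsummable : Summable a := by
    apply summable_of_sum_range_le ha0 (c := C 0 / c)
    intro n
    have h := htel 0 n (Nat.zero_le n)
    rw [Finset.range_eq_Ico]
    rw [le_div_iff₀ hc]
    have := haC0 n
    nlinarith [this, h, ha1]
  have hatend : Filter.Tendsto a Filter.atTop (nhds 0) := hsummable.tendsto_atTop_zero
  -- a N * C N → 0
  have haCtend : Filter.Tendsto (fun N => a N * C N) Filter.atTop (nhds 0) := by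
    apply squeeze_zero haC0 (g := fun N => φs * a N)
    · intro N
      calc a N * C N ≤ a N * φs := mul_le_mul_of_nonneg_left (hCu N) (ha0 N)
      _ = φs * a N := mul_comm _ _
    · simpa using hatend.const_mul φs
  -- N * a N → 0
  have hnatend : Filter.Tendsto (fun N : ℕ => (N : ℝ) * a N) Filter.atTop (nhds 0) := by
    have htail : Filter.Tendsto (fun i => ∑' k, a (k + i)) Filter.atTop (nhds 0) :=
      tendsto_sum_nat_add a
    have hdiv : Filter.Tendsto (fun n : ℕ => n / 2) Filter.atTop Filter.atTop := by
      apply Filter.tendsto_atTop_atTop.2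
      intro b
      exact ⟨2 * b, fun n hn => Nat.le_div_iff_mul_le (by norm_num) |>.2 (by omega)⟩
    apply squeeze_zero (g := fun n : ℕ => 2 * ∑' k, a (k + n / 2))
    · intro n; exact mul_nonneg (Nat.cast_nonneg n) (ha0 n)
    · intro n
      have hsum' : Summable (fun k => a (k + n / 2)) := (summable_nat_add_iff _).2 hsummable
      have h1 : ((n - n / 2 : ℕ) : ℝ) * a n ≤ ∑ k ∈ Finset.range (n - n / 2), a (k + n / 2) := by
        have := Finset.card_nsmul_le_sum (Finset.range (n - n / 2))
          (fun k => a (k + n / 2)) (a n) (fun k hk => by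
            apply hAnti
            have := Finset.mem_range.mp hk
            omega)
        simpa [nsmul_eq_mul] using this
      have h2 : ∑ k ∈ Finset.range (n - n / 2), a (k + n / 2) ≤ ∑' k, a (k + n / 2) :=
        Summable.sum_le_tsum _ (fun k _ => ha0 _) hsum'
      have h3 : (n : ℝ) ≤ 2 * ((n - n / 2 : ℕ) : ℝ) := by
        have : n ≤ 2 * (n - n / 2) := by omega
        exact_mod_cast this
      nlinarith [ha0 n, h1, h2]
    · simpa using (htail.comp hdiv).const_mul 2
  refine ⟨hqb, ?_⟩
  intro t hat
  set f : ℕ → ℝ := fun s => if t < s then c * (s : ℝ) * p s else 0 with hf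
  have hfnn : ∀ s, 0 ≤ f s := by
    intro s
    rw [hf]
    dsimp only
    split
    · rename_i hts
      match s, hts with
      | (s' + 1), hts =>
        rw [hp s']
        have := hanti s'
        have hc' : (0:ℝ) ≤ c * (s' + 1 : ℕ) := by positivity
        exact mul_nonneg hc' (by linarith)
    · exact le_refl 0
  -- explicit partial sums of f
  have hpar : ∀ N, t ≤ N → ∑ s ∈ Finset.range (N + 1), f s =
      c * t * a t + c * (∑ s ∈ Finset.Ico t N, a s) - c * N * a N := by
    intro N htN
    induction N with
    | zero =>
      have ht0 : t = 0 := Nat.le_zero.mp htN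
      subst ht0
      simp [hf]
    | succ N ih =>
      rcases Nat.lt_or_ge t (N + 1) with h | h
      · have htN' : t ≤ N := Nat.lt_succ_iff.mp h
        rw [Finset.sum_range_succ, ih htN', Finset.sum_Ico_succ_top htN']
        have hfval : f (N + 1) = c * (N + 1 : ℕ) * (a N - a (N + 1)) := by
          rw [hf]; dsimp only
          rw [if_pos (by omega), hp N]
        rw [hfval]
        push_cast
        ring
      · have htN1 : t = N + 1 := le_antisymm htN h
        subst htN1
        have hz : ∑ s ∈ Finset.range (N + 1 + 1), f s = 0 := by
          apply Finset.sum_eq_zero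
          intro s hs
          rw [hf]; dsimp only
          rw [if_neg (by simp at hs; omega)]
        rw [hz]
        simp
  -- the sum
  have hhs : HasSum f (c * t * a t + a t * C t) := by
    rw [hasSum_iff_tendsto_nat_of_nonneg hfnn]
    rw [← Filter.tendsto_add_atTop_iff_nat 1]
    have heq : ∀ᶠ N in Filter.atTop, c * t * a t + a t * C t - (a N * C N + c * N * a N)
        = ∑ s ∈ Finset.range (N + 1), f s := by
      filter_upwards [Filter.eventually_ge_atTop t] with N htN
      rw [hpar N htN, htel t N htN]
      ring
    have hlim : Filter.Tendsto
        (fun N => c * t * a t + a t * C t - (a N * C N + c * N * a N))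
        Filter.atTop (nhds (c * t * a t + a t * C t)) := by
      have := (tendsto_const_nhds :
          Filter.Tendsto (fun _ : ℕ => c * t * a t + a t * C t) Filter.atTop _).sub
        (haCtend.add (by simpa [mul_assoc] using hnatend.const_mul c))
      simpa [mul_assoc] using this
    exact hlim.congr' heq
  rw [hhs.tsum_eq]
  have hne : a t ≠ 0 := ne_of_gt hat
  field_simp
  ring
end

section
/- Let h : ℕ → ℝ be S-shaped with threshold t*, meaning h(t+1) − h(t) < h(t) − h(t−1) if and only if t > t*. For t ∈ ℕ, suppose s*(t) := min{s > t : h(s+1) − h(s) < (h(s) − h(t))/(s − t)} exists. Then s*(t) > t*, and the conditional concavification cconv_t(h), defined by linear interpolation between (t, h(t)) and (s*(t), h(s*(t))) on [t, s*(t)] and equal to h beyond s*(t), is concave on {s ∈ ℕ : s ≥ t} and satisfies cconv_t(h)(s) ≥ h(s) for all s ≥ t. -/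
/-!
Below `t*` the increments of `h` increase, so for `s ≤ t*` the chord from `t` to `s` would be no
steeper than the increment at `s`; hence the crossing point `s = s*(t)` lies beyond `t*`. Before `s`
the increments are at least the chord slope from `t`, which makes that slope nondecreasing up to
`s`, so `h` lies below the chord. The concavification has constant increments on `[t, s]`, then the
increment of `h` at `s` (smaller than the chord slope), and from there on the increments of `h`,
which decrease since we are past `t*`.
-/

/-- The paper's condition at `t + 1`, shifted so that no truncated subtraction occurs. -/
def IsSShaped (h : ℕ → ℝ) (tstar : ℕ) : Prop :=
  ∀ t : ℕ, (h (t + 2) - h (t + 1) < h (t + 1) - h t ↔ tstar < t + 1)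

noncomputable def slopeFrom (h : ℕ → ℝ) (t j : ℕ) : ℝ := (h j - h t) / ((j : ℝ) - t)

lemma div_le_add_div_add_one {a b d : ℝ} (hd : 0 < d) (hab : a / d ≤ b) :
    a / d ≤ (a + b) / (d + 1) := by
  rw [div_le_iff₀ hd] at hab
  rw [div_le_div_iff₀ hd (by linarith)]
  linarith

lemma interpolation_eq {t s x a b : ℝ} (hts : t ≠ s) :
    (s - x) / (s - t) * a + (x - t) / (s - t) * b = a + (x - t) * ((b - a) / (s - t)) := by
  have : s - t ≠ 0 := sub_ne_zero.mpr hts.symm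
  field_simp
  ring

lemma sub_le_mul_of_forall_sub_le (h : ℕ → ℝ) {t s : ℕ} (hts : t ≤ s) {c : ℝ}
    (hc : ∀ j ∈ Finset.Ico t s, h (j + 1) - h j ≤ c) : h s - h t ≤ ((s : ℝ) - t) * c := by
  rw [← Finset.sum_Ico_sub h hts]
  calc ∑ j ∈ Finset.Ico t s, (h (j + 1) - h j) ≤ (Finset.Ico t s).card • c :=
        Finset.sum_le_card_nsmul _ _ _ hc
    _ = ((s : ℝ) - t) * c := by
        rw [Nat.card_Ico, nsmul_eq_mul, Nat.cast_sub hts]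

section

variable {h : ℕ → ℝ} {t s : ℕ}

lemma IsSShaped.monotoneOn_sub {tstar : ℕ} (hS : IsSShaped h tstar) :
    MonotoneOn (fun j ↦ h (j + 1) - h j) (Set.Iic tstar) := by
  refine monotoneOn_of_le_add_one Set.ordConnected_Iic fun j _ _ hj ↦ not_lt.mp fun hlt ↦ ?_
  have := (hS j).mp hlt
  simp only [Set.mem_Iic] at hj
  omega

lemma IsSShaped.sub_lt_sub {tstar : ℕ} (hS : IsSShaped h tstar) {j : ℕ} (hj : tstar ≤ j) :
    h (j + 2) - h (j + 1) < h (j + 1) - h j :=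
  (hS j).mpr (by omega)

lemma IsSShaped.lt_of_sub_lt_slopeFrom {tstar : ℕ} (hS : IsSShaped h tstar) (hts : t < s)
    (hcross : h (s + 1) - h s < slopeFrom h t s) : tstar < s := by
  by_contra! hs
  have hchord : h s - h t ≤ ((s : ℝ) - t) * (h (s + 1) - h s) :=
    sub_le_mul_of_forall_sub_le h hts.le fun j hj ↦ by
      rw [Finset.mem_Ico] at hj
      exact hS.monotoneOn_sub (Set.mem_Iic.mpr (by omega)) (Set.mem_Iic.mpr hs) hj.2.le
  have hpos : (0 : ℝ) < (s : ℝ) - t := sub_pos.mpr (Nat.cast_lt.mpr hts)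
  rw [slopeFrom, lt_div_iff₀ hpos] at hcross
  linarith

lemma mul_slopeFrom (h : ℕ → ℝ) {t j : ℕ} (htj : t ≠ j) :
    ((j : ℝ) - t) * slopeFrom h t j = h j - h t :=
  mul_div_cancel₀ _ (sub_ne_zero.mpr (Nat.cast_injective.ne htj.symm))

lemma slopeFrom_le_slopeFrom_add_one {j : ℕ} (htj : t < j)
    (hj : slopeFrom h t j ≤ h (j + 1) - h j) : slopeFrom h t j ≤ slopeFrom h t (j + 1) := by
  have hpos : (0 : ℝ) < (j : ℝ) - t := sub_pos.mpr (Nat.cast_lt.mpr htj)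
  have hmed := div_le_add_div_add_one hpos hj
  rw [sub_add_sub_cancel', sub_add_eq_add_sub, ← Nat.cast_add_one] at hmed
  exact hmed

lemma monotoneOn_slopeFrom
    (hmin : ∀ j : ℕ, t < j → j < s → ¬ (h (j + 1) - h j < slopeFrom h t j)) :
    MonotoneOn (slopeFrom h t) (Set.Ioc t s) :=
  monotoneOn_of_le_add_one Set.ordConnected_Ioc fun j _ hj hj1 ↦
    slopeFrom_le_slopeFrom_add_one hj.1 <| not_lt.mp <| hmin j hj.1 (Nat.lt_of_succ_le hj1.2)

lemma le_add_mul_slopeFrom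
    (hmin : ∀ j : ℕ, t < j → j < s → ¬ (h (j + 1) - h j < slopeFrom h t j))
    {j : ℕ} (htj : t ≤ j) (hjs : j ≤ s) :
    h j ≤ h t + ((j : ℝ) - t) * slopeFrom h t s := by
  rcases htj.eq_or_lt with rfl | htj
  · simp
  have hle := monotoneOn_slopeFrom hmin ⟨htj, hjs⟩ ⟨htj.trans_le hjs, le_rfl⟩ hjs
  have hpos : (0 : ℝ) ≤ (j : ℝ) - t := sub_nonneg.mpr (Nat.cast_le.mpr htj.le)
  calc h j = h t + ((j : ℝ) - t) * slopeFrom h t j := by rw [mul_slopeFrom h htj.ne]; ring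
    _ ≤ h t + ((j : ℝ) - t) * slopeFrom h t s := by gcongr

variable {g : ℕ → ℝ}

lemma sub_eq_slopeFrom_of_lt
    (hline : ∀ j, t ≤ j → j ≤ s → g j = h t + ((j : ℝ) - t) * slopeFrom h t s)
    {j : ℕ} (htj : t ≤ j) (hjs : j < s) : g (j + 1) - g j = slopeFrom h t s := by
  rw [hline (j + 1) (by omega) hjs, hline j htj hjs.le]
  push_cast
  ring

lemma sub_eq_sub_of_le (hts : t < s)
    (hline : ∀ j, t ≤ j → j ≤ s → g j = h t + ((j : ℝ) - t) * slopeFrom h t s)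
    (htail : ∀ j, s < j → g j = h j) {j : ℕ} (hsj : s ≤ j) :
    g (j + 1) - g j = h (j + 1) - h j := by
  have hgs : g s = h s := by
    rw [hline s hts.le le_rfl, mul_slopeFrom h hts.ne, add_sub_cancel]
  rcases hsj.eq_or_lt with rfl | hsj
  · rw [htail _ (Nat.lt_succ_self _), hgs]
  · rw [htail _ (hsj.trans (Nat.lt_succ_self _)), htail j hsj]

lemma sub_add_two_le_sub {tstar : ℕ} (hS : IsSShaped h tstar) (hts : t < s)
    (hcross : h (s + 1) - h s < slopeFrom h t s)
    (hline : ∀ j, t ≤ j → j ≤ s → g j = h t + ((j : ℝ) - t) * slopeFrom h t s)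
    (htail : ∀ j, s < j → g j = h j) {j : ℕ} (htj : t ≤ j) :
    g (j + 2) - g (j + 1) ≤ g (j + 1) - g j := by
  rcases lt_trichotomy (j + 1) s with hlt | heq | hgt
  · rw [sub_eq_slopeFrom_of_lt hline htj (by omega), sub_eq_slopeFrom_of_lt hline (by omega) hlt]
  · subst heq
    rw [sub_eq_slopeFrom_of_lt hline htj (Nat.lt_succ_self _),
      sub_eq_sub_of_le hts hline htail le_rfl]
    exact hcross.le
  · have hthr := hS.lt_of_sub_lt_slopeFrom hts hcross
    rw [sub_eq_sub_of_le hts hline htail (by omega : s ≤ j + 1),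
      sub_eq_sub_of_le hts hline htail (by omega : s ≤ j)]
    exact (hS.sub_lt_sub (by omega)).le

end

/-- For an S-shaped h with crossing time s*(t), one has s*(t) > t*, and the conditional
concavification from t is concave on {s ≥ t} and dominates h there. -/
theorem stmt7 (h : ℕ → ℝ) (tstar : ℕ)
    (hS : ∀ t : ℕ, (h (t + 2) - h (t + 1) < h (t + 1) - h t ↔ tstar < t + 1))
    (t s : ℕ) (hts : t < s)
    (hdef : h (s + 1) - h s < (h s - h t) / ((s : ℝ) - t))
    (hmin : ∀ s' : ℕ, t < s' → s' < s →
      ¬ (h (s' + 1) - h s' < (h s' - h t) / ((s' : ℝ) - t)))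
    (g : ℕ → ℝ)
    (hg1 : ∀ s' : ℕ, t ≤ s' → s' ≤ s →
      g s' = (((s : ℝ) - s') / ((s : ℝ) - t)) * h t
        + (((s' : ℝ) - t) / ((s : ℝ) - t)) * h s)
    (hg2 : ∀ s' : ℕ, s < s' → g s' = h s') :
    tstar < s ∧
    (∀ s' : ℕ, t ≤ s' → g (s' + 2) - g (s' + 1) ≤ g (s' + 1) - g s') ∧
    (∀ s' : ℕ, t ≤ s' → h s' ≤ g s') := by
  have hline : ∀ j, t ≤ j → j ≤ s → g j = h t + ((j : ℝ) - t) * slopeFrom h t s :=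
    fun j htj hjs ↦ by rw [hg1 j htj hjs, interpolation_eq (Nat.cast_injective.ne hts.ne)]; rfl
  refine ⟨IsSShaped.lt_of_sub_lt_slopeFrom hS hts hdef,
    fun j htj ↦ sub_add_two_le_sub hS hts hdef hline hg2 htj, fun j htj ↦ ?_⟩
  rcases le_or_gt j s with hjs | hsj
  · rw [hline j htj hjs]
    exact le_add_mul_slopeFrom hmin htj hjs
  · rw [hg2 j hsj]
end

section
/- Let h : ℕ → ℝ be S-shaped with threshold t* and suppose s*(t) exists for all t (where s*(t) := min{s > t : h(s+1) − h(s) < (h(s) − h(t))/(s − t)}). Then: (i) if t ≤ t' < s*(t) then s*(t') ≤ s*(t); (ii) if t < t' then s*(t') − t' ≤ s*(t) − t, with strict inequality when t < t*. -/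
/-!
Before `s*(t)` every increment of `h` is at least the slope of the current chord from `t`, so the
chord slopes from `t` increase up to `s*(t)`. For `t < t' < s*(t)` the chord from `t'` to `s*(t)`
is therefore at least as steep as the one from `t`, so the crossing that defines `s*(t)` is also a crossing from `t'`, giving (i).
For (ii) it suffices to compare `t` with `t + 1`: either `t + 1 < s*(t)` and (i) applies, or
`s*(t) = t + 1`, which happens exactly when `t* ≤ t` (on the concave part the very first increment
already drops below the chord), and then also `s*(t + 1) = t + 2`.
-/

noncomputable def chordSlope (h : ℕ → ℝ) (t s : ℕ) : ℝ := (h s - h t) / ((s : ℝ) - t)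

def Crosses (h : ℕ → ℝ) (t s : ℕ) : Prop := h (s + 1) - h s < chordSlope h t s

structure IsFirstCrossing (h : ℕ → ℝ) (s : ℕ → ℕ) : Prop where
  lt : ∀ t, t < s t
  crosses : ∀ t, Crosses h t (s t)
  not_crosses : ∀ t u, t < u → u < s t → ¬ Crosses h t u

section chordSlope

variable (h : ℕ → ℝ) {t u s : ℕ}

/- The next two lemmas express that `chordSlope h t s` is a weighted average of
`chordSlope h t u` and `chordSlope h u s` when `t < u < s`. -/

theorem chordSlope_self_succ (u : ℕ) : chordSlope h u (u + 1) = h (u + 1) - h u := by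
  simp [chordSlope]

theorem chordSlope_le_of_le_adjacent (htu : t < u) (hus : u < s)
    (hle : chordSlope h t u ≤ chordSlope h u s) : chordSlope h t u ≤ chordSlope h t s := by
  have htu' : (t : ℝ) < u := by exact_mod_cast htu
  have hus' : (u : ℝ) < s := by exact_mod_cast hus
  unfold chordSlope at *
  rw [div_le_div_iff₀ (by linarith) (by linarith)] at *
  linarith

theorem chordSlope_le_adjacent_of_le (htu : t < u) (hus : u < s)
    (hle : chordSlope h t u ≤ chordSlope h t s) : chordSlope h t s ≤ chordSlope h u s := by
  have htu' : (t : ℝ) < u := by exact_mod_cast htu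
  have hus' : (u : ℝ) < s := by exact_mod_cast hus
  unfold chordSlope at *
  rw [div_le_div_iff₀ (by linarith) (by linarith)] at *
  linarith

end chordSlope

theorem crosses_self_succ_iff (h : ℕ → ℝ) (t : ℕ) :
    Crosses h t (t + 1) ↔ h (t + 2) - h (t + 1) < h (t + 1) - h t := by
  rw [Crosses, chordSlope_self_succ]

namespace IsFirstCrossing

variable {h : ℕ → ℝ} {s : ℕ → ℕ} {t t' : ℕ}

theorem le_of_crosses (hs : IsFirstCrossing h s) {u : ℕ} (htu : t < u) (hu : Crosses h t u) :
    s t ≤ u :=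
  not_lt.mp fun hlt => hs.not_crosses t u htu hlt hu

theorem chordSlope_mono (hs : IsFirstCrossing h s) {u v : ℕ} (htu : t < u) (huv : u ≤ v)
    (hv : v ≤ s t) : chordSlope h t u ≤ chordSlope h t v := by
  induction v, huv using Nat.le_induction with
  | base => exact le_rfl
  | succ v huv ih =>
    have htv : t < v := htu.trans_le huv
    have hinc : chordSlope h t v ≤ chordSlope h v (v + 1) := by
      rw [chordSlope_self_succ]
      exact not_lt.mp (hs.not_crosses t v htv (by omega))
    exact (ih (by omega)).trans
      (chordSlope_le_of_le_adjacent h htv v.lt_succ_self hinc)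

theorem le_of_le_of_lt (hs : IsFirstCrossing h s) (htt' : t ≤ t') (ht' : t' < s t) :
    s t' ≤ s t := by
  rcases htt'.eq_or_lt with rfl | htt'
  · exact le_rfl
  · refine hs.le_of_crosses ht' (lt_of_lt_of_le (hs.crosses t) ?_)
    exact chordSlope_le_adjacent_of_le h htt' ht'
      (hs.chordSlope_mono htt' ht'.le le_rfl)

theorem eq_succ_iff (hs : IsFirstCrossing h s) {tstar : ℕ} (hS : IsSShaped h tstar) :
    s t = t + 1 ↔ tstar ≤ t := by
  constructor
  · intro hst
    have := hs.crosses t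
    rw [hst, crosses_self_succ_iff, hS t] at this
    omega
  · intro ht
    have hc : Crosses h t (t + 1) := by rw [crosses_self_succ_iff, hS t]; omega
    have := hs.le_of_crosses t.lt_succ_self hc
    have := hs.lt t
    omega

theorem sub_succ_le (hs : IsFirstCrossing h s) {tstar : ℕ} (hS : IsSShaped h tstar) (t : ℕ) :
    s (t + 1) - (t + 1) ≤ s t - t := by
  by_cases hts : t + 1 < s t
  · have := hs.le_of_le_of_lt (Nat.le_add_right t 1) hts
    omega
  · have hst : s t = t + 1 := by have := hs.lt t; omega
    have htstar : tstar ≤ t := (hs.eq_succ_iff hS).mp hst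
    have hst' : s (t + 1) = t + 1 + 1 := (hs.eq_succ_iff hS).mpr (by omega)
    omega

theorem sub_succ_lt (hs : IsFirstCrossing h s) {tstar : ℕ} (hS : IsSShaped h tstar)
    (ht : t < tstar) : s (t + 1) - (t + 1) < s t - t := by
  have hts : t + 1 < s t := by
    have hne : s t ≠ t + 1 := by rw [Ne, hs.eq_succ_iff hS]; omega
    have := hs.lt t
    omega
  have := hs.le_of_le_of_lt (Nat.le_add_right t 1) hts
  omega

theorem antitone_sub (hs : IsFirstCrossing h s) {tstar : ℕ} (hS : IsSShaped h tstar) :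
    Antitone fun t => s t - t :=
  antitone_nat_of_succ_le (hs.sub_succ_le hS)

end IsFirstCrossing

/-- Monotonicity properties of the lookahead time s*(t) for an S-shaped h. -/
theorem stmt8 (h : ℕ → ℝ) (tstar : ℕ)
    (hS : ∀ t : ℕ, (h (t + 2) - h (t + 1) < h (t + 1) - h t ↔ tstar < t + 1))
    (sstar : ℕ → ℕ)
    (hlt : ∀ t, t < sstar t)
    (hdef : ∀ t, h (sstar t + 1) - h (sstar t)
      < (h (sstar t) - h t) / ((sstar t : ℝ) - t))
    (hmin : ∀ t s' : ℕ, t < s' → s' < sstar t →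
      ¬ (h (s' + 1) - h s' < (h s' - h t) / ((s' : ℝ) - t))) :
    (∀ t t' : ℕ, t ≤ t' → t' < sstar t → sstar t' ≤ sstar t) ∧
    (∀ t t' : ℕ, t < t' → sstar t' - t' ≤ sstar t - t) ∧
    (∀ t t' : ℕ, t < t' → t < tstar → sstar t' - t' < sstar t - t) := by
  have hs : IsFirstCrossing h sstar := ⟨hlt, hdef, hmin⟩
  exact ⟨fun t t' => hs.le_of_le_of_lt,
    fun t t' htt' => hs.antitone_sub hS htt'.le,
    fun t t' htt' ht => (hs.antitone_sub hS htt').trans_lt (hs.sub_succ_lt hS ht)⟩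
end

section
/- Let h : ℕ → ℝ be convex and increasing, c > 0, and φ*/c an integer with 0 < c < φ*. Let τ be the deterministic-terminal stopping time: Pr(τ = t₁) = p and Pr(τ = t̄) = 1 − p with t₁ < t̄, and E[τ] = φ*/c. Let τ'' be the geometric stopping time with Pr(τ'' = t) for t ∈ {t₁, t₁+1, …} given by Pr(τ'' = t₁) = c·t₁/φ* and Pr(τ'' = t+1 | τ'' > t) = c/φ* for t ≥ t₁, so E[τ''] = φ*/c. If Pr(τ'' = t₁) ≥ Pr(τ = t₁), then E[h(τ'')] ≥ E[h(τ)]. -/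
set_option maxHeartbeats 1000000

section aux

variable (h : ℕ → ℝ)

lemma aux_dmono (hconv : ∀ t : ℕ, h (t + 1) - h t ≤ h (t + 2) - h (t + 1)) :
    ∀ i j : ℕ, i ≤ j → h (i + 1) - h i ≤ h (j + 1) - h j := by
  intro i j hij
  induction j, hij using Nat.le_induction with
  | base => exact le_refl _
  | succ j hij ih => exact ih.trans (hconv j)

lemma aux_low (hconv : ∀ t : ℕ, h (t + 1) - h t ≤ h (t + 2) - h (t + 1)) :
    ∀ t n : ℕ, h (t + n) - h t ≤ (n : ℝ) * (h (t + n + 1) - h (t + n)) := by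
  intro t n
  induction n with
  | zero => simp
  | succ n ih =>
      have d1 : h (t + n + 1) - h (t + n) ≤ h (t + n + 2) - h (t + n + 1) := hconv (t + n)
      have hn : (0:ℝ) ≤ (n:ℝ) := Nat.cast_nonneg n
      have e1 : t + (n + 1) = t + n + 1 := by omega
      have e2 : t + (n + 1) + 1 = t + n + 2 := by omega
      rw [e2, e1]
      push_cast
      nlinarith [ih, d1]

lemma aux_high (hconv : ∀ t : ℕ, h (t + 1) - h t ≤ h (t + 2) - h (t + 1)) :
    ∀ t n : ℕ, (n : ℝ) * (h (t + 1) - h t) ≤ h (t + n) - h t := by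
  intro t n
  induction n with
  | zero => simp
  | succ n ih =>
      have d1 : h (t + 1) - h t ≤ h (t + n + 1) - h (t + n) :=
        aux_dmono h hconv t (t + n) (Nat.le_add_right _ _)
      have e1 : t + (n + 1) = t + n + 1 := by omega
      rw [e1]
      push_cast
      nlinarith [ih, d1]

lemma aux_line (hconv : ∀ t : ℕ, h (t + 1) - h t ≤ h (t + 2) - h (t + 1)) (tb : ℕ) :
    ∀ t : ℕ, h tb + (h (tb + 1) - h tb) * ((t : ℝ) - (tb : ℝ)) ≤ h t := by
  intro t
  rcases le_or_gt t tb with hle | hlt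
  · obtain ⟨n, rfl⟩ := Nat.exists_eq_add_of_le hle
    have := aux_low h hconv t n
    push_cast
    nlinarith [this]
  · obtain ⟨n, rfl⟩ := Nat.exists_eq_add_of_le hlt.le
    have := aux_high h hconv tb n
    push_cast
    nlinarith [this]

end aux

/-- Mean-preserving comparison: for convex increasing h, the geometric stopping time
τ'' dominates the two-point stopping time τ with the same mean φ*/c. -/
theorem stmt16 (c φs : ℝ) (hc : 0 < c) (hcφ : c < φs)
    (m : ℕ) (hm : c * m = φs) (hm0 : 0 < m)
    (h : ℕ → ℝ) (hmono : Monotone h)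
    (hconv : ∀ t : ℕ, h (t + 1) - h t ≤ h (t + 2) - h (t + 1))
    (t1 tbar : ℕ) (ht : t1 < tbar) (p : ℝ) (hp0 : 0 ≤ p) (hp1 : p ≤ 1)
    (hmean : (t1 : ℝ) * p + (tbar : ℝ) * (1 - p) = φs / c)
    (q'' : ℕ → ℝ)
    (hqlt : ∀ t, t < t1 → q'' t = 0)
    (hqt1 : q'' t1 = c * t1 / φs)
    (hqgt : ∀ t : ℕ, t1 ≤ t →
      q'' (t + 1) = (c / φs) * (1 - c * t1 / φs) * (1 - c / φs) ^ (t - t1))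
    (hsum : Summable fun t => q'' t * h t)
    (hmass : p ≤ c * t1 / φs) :
    p * h t1 + (1 - p) * h tbar ≤ ∑' t : ℕ, q'' t * h t := by
  have hφ : 0 < φs := hc.trans hcφ
  set r : ℝ := c / φs with hrdef
  have hr0 : 0 < r := div_pos hc hφ
  have hr1 : r < 1 := (div_lt_one hφ).mpr hcφ
  set x : ℝ := 1 - r with hxdef
  have hx0 : 0 ≤ x := by simp only [hxdef]; linarith
  have hx1 : x < 1 := by simp only [hxdef]; linarith
  have hxn : ‖x‖ < 1 := by rw [Real.norm_eq_abs, abs_of_nonneg hx0]; exact hx1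
  set a : ℝ := c * t1 / φs with hadef
  have hart : a = r * t1 := by rw [hadef, hrdef]; ring
  have hrm : r * m = 1 := by
    rw [hrdef]; field_simp; linarith [hm]
  have hmc : φs / c = (m : ℝ) := by
    field_simp; linarith [hm]
  have hmean' : (t1 : ℝ) * p + (tbar : ℝ) * (1 - p) = (m : ℝ) := by rw [hmean, hmc]
  have ht1m : (t1 : ℝ) ≤ (m : ℝ) := by
    have htb : (t1 : ℝ) < (tbar : ℝ) := by exact_mod_cast ht
    nlinarith [hmean']
  have ha1 : a ≤ 1 := by
    rw [hart]; nlinarith [hrm, ht1m, hr0]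
  have ha0 : 0 ≤ a := by
    rw [hart]; positivity
  -- tail formula
  have hqtail : ∀ n : ℕ, q'' (n + (t1 + 1)) = r * (1 - a) * x ^ n := by
    intro n
    have e : n + (t1 + 1) = (n + t1) + 1 := by omega
    rw [e, hqgt (n + t1) (Nat.le_add_left _ _)]
    rw [Nat.add_sub_cancel]
  -- line slope
  set s : ℝ := h (tbar + 1) - h tbar with hsdef
  have hs0 : 0 ≤ s := by
    simp only [hsdef]; have := hmono (Nat.le_succ tbar); linarith
  have hline : ∀ t : ℕ, h tbar + s * ((t : ℝ) - (tbar : ℝ)) ≤ h t :=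
    aux_line h hconv tbar
  -- summability facts
  have Sgeo : Summable (fun n : ℕ => x ^ n) := summable_geometric_of_lt_one hx0 hx1
  have Sn : Summable (fun n : ℕ => (n : ℝ) * x ^ n) := by
    have := summable_pow_mul_geometric_of_norm_lt_one (R := ℝ) 1 hxn
    simpa using this
  have Tgeo : ∑' n : ℕ, x ^ n = (m : ℝ) := by
    rw [tsum_geometric_of_lt_one hx0 hx1]
    have h1x : (1 : ℝ) - x = r := by rw [hxdef]; ring
    rw [h1x]
    have hrne : r ≠ 0 := ne_of_gt hr0
    field_simp
    linarith [hrm]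
  have Tn : ∑' n : ℕ, (n : ℝ) * x ^ n = x * (m : ℝ) ^ 2 := by
    rw [tsum_coe_mul_geometric_of_norm_lt_one hxn]
    have h1x : (1 : ℝ) - x = r := by rw [hxdef]; ring
    rw [h1x]
    have hrne : r ≠ 0 := ne_of_gt hr0
    have h2 : r ^ 2 * (m : ℝ) ^ 2 = 1 := by nlinarith [hrm]
    rw [div_eq_iff (pow_ne_zero 2 hrne)]
    linear_combination (-x) * h2
  -- split the tsum
  have hsplit := (Summable.sum_add_tsum_nat_add (f := fun t => q'' t * h t) (t1 + 1) hsum).symm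
  have hhead : (∑ i ∈ Finset.range (t1 + 1), q'' i * h i) = a * h t1 := by
    rw [Finset.sum_eq_single t1]
    · rw [hqt1]
    · intro b hb hbne
      have : b < t1 := by
        have := Finset.mem_range.mp hb; omega
      rw [hqlt b this]; ring
    · intro hnot
      exact absurd (Finset.mem_range.mpr (Nat.lt_succ_self t1)) hnot
  -- tail summables
  have Stail : Summable (fun n : ℕ => q'' (n + (t1 + 1)) * h (n + (t1 + 1))) :=
    (summable_nat_add_iff (t1 + 1)).mpr hsum
  -- lower bound function for tail
  set L : ℕ → ℝ := fun n => r * (1 - a) * x ^ n * (h tbar + s * (((n : ℝ) + (t1 : ℝ) + 1) - (tbar : ℝ))) with hLdef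
  have SL : Summable L := by
    have h1 : Summable (fun n : ℕ => (r * (1 - a) * (h tbar + s * ((t1 : ℝ) + 1 - (tbar : ℝ)))) * x ^ n) :=
      Sgeo.mul_left _
    have h2 : Summable (fun n : ℕ => (r * (1 - a) * s) * ((n : ℝ) * x ^ n)) :=
      Sn.mul_left _
    have := h1.add h2
    apply this.congr
    intro n
    simp only [hLdef]
    ring
  have hLle : ∀ n : ℕ, L n ≤ q'' (n + (t1 + 1)) * h (n + (t1 + 1)) := by
    intro n
    rw [hqtail n, hLdef]
    have hc0 : 0 ≤ r * (1 - a) * x ^ n := by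
      have : 0 ≤ (1 : ℝ) - a := by linarith
      positivity
    have := hline (n + (t1 + 1))
    have hcast : ((n + (t1 + 1) : ℕ) : ℝ) = (n : ℝ) + (t1 : ℝ) + 1 := by push_cast; ring
    rw [hcast] at this
    exact mul_le_mul_of_nonneg_left this hc0
  have htail_ge : ∑' n : ℕ, L n ≤ ∑' n : ℕ, q'' (n + (t1 + 1)) * h (n + (t1 + 1)) :=
    Summable.tsum_le_tsum hLle SL Stail
  -- compute tsum of L
  have TL : ∑' n : ℕ, L n =
      (r * (1 - a) * (h tbar + s * ((t1 : ℝ) + 1 - (tbar : ℝ)))) * (m : ℝ)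
      + (r * (1 - a) * s) * (x * (m : ℝ) ^ 2) := by
    have h1 : Summable (fun n : ℕ => (r * (1 - a) * (h tbar + s * ((t1 : ℝ) + 1 - (tbar : ℝ)))) * x ^ n) :=
      Sgeo.mul_left _
    have h2 : Summable (fun n : ℕ => (r * (1 - a) * s) * ((n : ℝ) * x ^ n)) :=
      Sn.mul_left _
    have heq : L = fun n : ℕ =>
        (r * (1 - a) * (h tbar + s * ((t1 : ℝ) + 1 - (tbar : ℝ)))) * x ^ n
        + (r * (1 - a) * s) * ((n : ℝ) * x ^ n) := by
      funext n; simp only [hLdef]; ring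
    rw [heq, Summable.tsum_add h1 h2, tsum_mul_left, tsum_mul_left, Tgeo, Tn]
  -- assemble
  rw [hsplit, hhead]
  have hstep1 : p * h t1 + (a - p) * (h tbar + s * ((t1 : ℝ) - (tbar : ℝ))) ≤ a * h t1 := by
    have hap : 0 ≤ a - p := by linarith [hmass]
    have := hline t1
    nlinarith [mul_le_mul_of_nonneg_left this hap]
  have hkey : (a - p) * (h tbar + s * ((t1 : ℝ) - (tbar : ℝ)))
      + ((r * (1 - a) * (h tbar + s * ((t1 : ℝ) + 1 - (tbar : ℝ)))) * (m : ℝ)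
        + (r * (1 - a) * s) * (x * (m : ℝ) ^ 2)) = (1 - p) * h tbar := by
    have ham : a * (m : ℝ) = (t1 : ℝ) := by
      rw [hart]; linear_combination (t1 : ℝ) * hrm
    have hrm1 : r * (1 - a) * (m : ℝ) = 1 - a := by linear_combination (1 - a) * hrm
    have hrx : r * (1 - a) * (x * (m : ℝ) ^ 2) = (1 - a) * ((m : ℝ) - 1) := by
      rw [hxdef]
      linear_combination ((1 - a) * (1 - r) * (m : ℝ) - (1 - a)) * hrm
    linear_combination (h tbar + s * ((t1 : ℝ) + 1 - (tbar : ℝ))) * hrm1 + s * hrx - s * ham - s * hmean'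
  calc p * h t1 + (1 - p) * h tbar
      = p * h t1 + ((a - p) * (h tbar + s * ((t1 : ℝ) - (tbar : ℝ)))
        + ((r * (1 - a) * (h tbar + s * ((t1 : ℝ) + 1 - (tbar : ℝ)))) * (m : ℝ)
          + (r * (1 - a) * s) * (x * (m : ℝ) ^ 2))) := by rw [hkey]
    _ ≤ a * h t1 + ∑' n : ℕ, L n := by
        rw [TL]; linarith [hstep1]
    _ ≤ a * h t1 + ∑' n : ℕ, q'' (n + (t1 + 1)) * h (n + (t1 + 1)) := by
        linarith [htail_ge]
end

section
/- Let Θ, A be finite, v : A × Θ → ℝ, v*(μ) := max_a E_{θ∼μ} v(a,θ), and let π be a finitely-supported distribution over Δ(Θ). Suppose each μ ∈ supp(π) is written as a convex combination μ = Σ_{μ*∈E(μ)} α_μ(μ*)·μ* of extreme points of the polytope X_{a*(μ)} of beliefs where all of μ's best responses remain optimal. Define the extremal distribution π* by π*(μ*) := E_{μ∼π}[α_μ(μ*)]. Then: (i) Σ_{μ*} π*(μ*)·μ* = E_{μ∼π}[μ] (mean preservation), and (ii) Σ_{μ*} π*(μ*)·v*(μ*) = E_{μ∼π}[v*(μ)]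 (value preservation). -/
open Finset

/-- The extremal signal structure preserves the mean belief and the DM's expected
indirect utility. -/
theorem stmt18 {A Θ ι K : Type*} [Fintype A] [Nonempty A] [Fintype Θ]
    [Fintype ι] [Fintype K]
    (v : A → Θ → ℝ)
    (vstar : (Θ → ℝ) → ℝ)
    (hv : ∀ μ : Θ → ℝ,
      vstar μ = univ.sup' univ_nonempty (fun a => ∑ θ, μ θ * v a θ))
    (w : ι → ℝ) (hw : ∀ i, 0 ≤ w i) (hw1 : ∑ i, w i = 1)
    (μ : ι → Θ → ℝ)
    (ext : K → Θ → ℝ)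
    (α : ι → K → ℝ) (hα : ∀ i k, 0 ≤ α i k) (hα1 : ∀ i, ∑ k, α i k = 1)
    (hdecomp : ∀ i θ, μ i θ = ∑ k, α i k * ext k θ)
    (hBR : ∀ i k, 0 < α i k → ∀ a : A,
      (∀ b : A, (∑ θ, μ i θ * v b θ) ≤ ∑ θ, μ i θ * v a θ) →
      (∀ b : A, (∑ θ, ext k θ * v b θ) ≤ ∑ θ, ext k θ * v a θ))
    (πstar : K → ℝ) (hπ : ∀ k, πstar k = ∑ i, w i * α i k) :
    (∀ θ, (∑ k, πstar k * ext k θ) = ∑ i, w i * μ i θ) ∧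
    (∑ k, πstar k * vstar (ext k)) = ∑ i, w i * vstar (μ i) := by
  have key : ∀ i, vstar (μ i) = ∑ k, α i k * vstar (ext k) := by
    intro i
    obtain ⟨a, -, ha⟩ := univ.exists_max_image (fun a => ∑ θ, μ i θ * v a θ)
      univ_nonempty
    have ha' : ∀ b : A, (∑ θ, μ i θ * v b θ) ≤ ∑ θ, μ i θ * v a θ :=
      fun b => ha b (mem_univ b)
    have hvi : vstar (μ i) = ∑ θ, μ i θ * v a θ := by
      rw [hv]
      exact le_antisymm (sup'_le _ _ fun b _ => ha' b)
        (le_sup' (fun b => ∑ θ, μ i θ * v b θ) (mem_univ a))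
    rw [hvi]
    have : (∑ θ, μ i θ * v a θ) = ∑ k, α i k * ∑ θ, ext k θ * v a θ := by
      simp only [hdecomp, sum_mul, mul_sum]
      rw [Finset.sum_comm]
      simp [mul_assoc]
    rw [this]
    refine Finset.sum_congr rfl fun k _ => ?_
    rcases (hα i k).lt_or_eq with hpos | hzero
    · have hopt := hBR i k hpos a ha'
      have : vstar (ext k) = ∑ θ, ext k θ * v a θ := by
        rw [hv]
        exact le_antisymm (sup'_le _ _ fun b _ => hopt b)
          (le_sup' (fun b => ∑ θ, ext k θ * v b θ) (mem_univ a))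
      rw [this]
    · simp [← hzero]
  constructor
  · intro θ
    simp only [hπ, hdecomp, sum_mul, mul_sum]
    rw [Finset.sum_comm]
    simp [mul_assoc]
  · simp only [hπ, key, sum_mul, mul_sum]
    rw [Finset.sum_comm]
    simp [mul_assoc]
end
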